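/- Let x be a balanced word over {a,b} with m a's, all prefixes of nonnegative φ-value (φ(a)=2, φ(b)=−2), and let n ≥ 1. Then the letter-repeated word y = α₁ⁿ…αₜⁿ also has all prefixes of nonnegative φ-value, is balanced, has nm occurrences of a, and satisfies w(y) = n² w(x) ≥ 2nm. -/

import Mathlib

/-- A word over the alphabet {a,b} is a list of booleans: `true` = a, `false` = b. -/
abbrev Word := List Bool

/-- φ(a) = 2, φ(b) = -2, extended additively to words. -/
def phi (y : Word) : ℤ := (y.map (fun c => if c then (2 : ℤ) else -2)).sum

/-- The width of a word: the sum of φ over all nonempty prefixes. -/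
def wd (y : Word) : ℤ := ∑ i ∈ Finset.range y.length, phi (y.take (i + 1))

/-!
A prefix of `y = α₁ⁿ … αₜⁿ` consists of the blocks of a prefix `x'` of `x` followed by `r < n`
copies of the next letter `α`, so its φ-value lies between `n φ(x')` and `n φ(x' α)`, both
nonnegative. Each letter of `y` is counted once in every prefix containing it, which gives
`2 w(y) = 2 n² w(x) - n (n - 1) φ(x)`. Finally, `φ` of a word of odd length is `2 mod 4`, so the
odd-length prefixes of `x` have `φ ≥ 2`; pairing the `2m` prefixes of `x` gives `w(x) ≥ 2m`.
-/

def stutter (n : ℕ) (x : Word) : Word := x.flatMap (fun c => List.replicate n c)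

@[simp] lemma stutter_nil (n : ℕ) : stutter n [] = [] := rfl

lemma stutter_cons (n : ℕ) (c : Bool) (x : Word) :
    stutter n (c :: x) = List.replicate n c ++ stutter n x := rfl

lemma length_stutter (n : ℕ) (x : Word) : (stutter n x).length = n * x.length := by
  induction x with
  | nil => rfl
  | cons c x ih => simp only [stutter_cons, List.length_append, List.length_replicate, ih,
      List.length_cons]; ring

lemma count_stutter (n : ℕ) (b : Bool) (x : Word) :
    (stutter n x).count b = n * x.count b := by
  induction x with
  | nil => rfl
  | cons c x ih =>
    rw [stutter_cons, List.count_append, ih, List.count_cons, List.count_replicate]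
    cases b <;> cases c <;> simp <;> ring

@[simp] lemma phi_nil : phi [] = 0 := rfl

lemma phi_append (x y : Word) : phi (x ++ y) = phi x + phi y := by simp [phi]

lemma phi_cons (c : Bool) (x : Word) : phi (c :: x) = phi [c] + phi x := phi_append [c] x

lemma phi_singleton (c : Bool) : phi [c] = if c then 2 else -2 := by simp [phi]

lemma phi_replicate (n : ℕ) (c : Bool) : phi (List.replicate n c) = n * phi [c] := by
  simp [phi]

lemma phi_stutter (n : ℕ) (x : Word) : phi (stutter n x) = n * phi x := by
  induction x with
  | nil => simp
  | cons c x ih =>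
    rw [stutter_cons, phi_append, phi_replicate, ih, phi_cons c x]; ring

lemma phi_eq_count (x : Word) : phi x = 4 * x.count true - 2 * x.length := by
  induction x with
  | nil => rfl
  | cons c x ih =>
    rw [phi_cons c x, ih, phi_singleton, List.count_cons, List.length_cons]
    cases c <;> simp <;> ring

lemma wd_append (x y : Word) : wd (x ++ y) = wd x + y.length * phi x + wd y := by
  have hx : ∀ i ∈ Finset.range x.length, phi ((x ++ y).take (i + 1)) = phi (x.take (i + 1)) :=
    fun i hi => by rw [List.take_append_of_le_length (Finset.mem_range.mp hi)]
  have hy : ∀ i ∈ Finset.range y.length,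
      phi ((x ++ y).take (x.length + i + 1)) = phi x + phi (y.take (i + 1)) :=
    fun i _ => by rw [add_assoc, List.take_length_add_append, phi_append]
  rw [wd, List.length_append, Finset.sum_range_add, Finset.sum_congr rfl hx,
    Finset.sum_congr rfl hy, Finset.sum_add_distrib, Finset.sum_const, Finset.card_range,
    nsmul_eq_mul, wd, wd]
  ring

lemma wd_singleton (c : Bool) : wd [c] = phi [c] := by simp [wd]

lemma two_mul_wd_replicate (n : ℕ) (c : Bool) :
    2 * wd (List.replicate n c) = n * (n + 1) * phi [c] := by
  induction n with
  | zero => simp [wd]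
  | succ n ih =>
    rw [List.replicate_succ', wd_append, wd_singleton, phi_replicate, List.length_singleton]
    push_cast; linear_combination ih

lemma wd_cons (c : Bool) (x : Word) : wd (c :: x) = (x.length + 1) * phi [c] + wd x := by
  rw [← List.singleton_append, wd_append, wd_singleton]; ring

lemma two_mul_wd_stutter (n : ℕ) (x : Word) :
    2 * wd (stutter n x) = 2 * n ^ 2 * wd x - n * (n - 1) * phi x := by
  induction x with
  | nil => simp [wd]
  | cons c x ih =>
    rw [stutter_cons, wd_append, length_stutter, phi_replicate, wd_cons, phi_cons c x]
    push_cast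
    linear_combination two_mul_wd_replicate n c + ih

lemma add_phi_take_stutter_nonneg (n : ℕ) (x : Word) (s : ℤ)
    (h : ∀ j, 0 ≤ s + n * phi (x.take j)) (i : ℕ) : 0 ≤ s + phi ((stutter n x).take i) := by
  induction x generalizing s i with
  | nil => simpa using h 0
  | cons c x ih =>
    rw [stutter_cons, List.take_append, List.take_replicate, List.length_replicate, phi_append,
      phi_replicate]
    rcases le_or_gt n i with hni | hin
    · have htail : ∀ j, 0 ≤ s + n * phi [c] + n * phi (x.take j) := fun j => by
        have := h (j + 1)
        rw [List.take_succ_cons, phi_cons c] at this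
        linarith
      rw [min_eq_right hni]
      linarith [ih _ htail (i - n)]
    · have hs : 0 ≤ s := by simpa using h 0
      have hsc : 0 ≤ s + n * phi [c] := by simpa using h 1
      have hi : (i : ℤ) ≤ n := by exact_mod_cast hin.le
      rw [min_eq_left hin.le, Nat.sub_eq_zero_of_le hin.le, List.take_zero, phi_nil]
      cases c <;> simp [phi_singleton] at hsc ⊢ <;> linarith

lemma phi_take_stutter_nonneg (n : ℕ) (x : Word) (hpre : ∀ i, 0 ≤ phi (x.take i)) (i : ℕ) :
    0 ≤ phi ((stutter n x).take i) := by
  simpa using add_phi_take_stutter_nonneg n x 0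
    (fun j => by simpa using mul_nonneg (Nat.cast_nonneg n) (hpre j)) i

lemma two_mul_le_sum_range_two_mul (f : ℕ → ℤ) (m : ℕ)
    (hf : ∀ k < m, 2 ≤ f (2 * k) + f (2 * k + 1)) :
    2 * (m : ℤ) ≤ ∑ i ∈ Finset.range (2 * m), f i := by
  induction m with
  | zero => simp
  | succ m ih =>
    rw [show 2 * (m + 1) = 2 * m + 1 + 1 by ring, Finset.sum_range_succ, Finset.sum_range_succ]
    push_cast
    linarith [ih fun k hk => hf k (by omega), hf m m.lt_succ_self]

lemma two_mul_count_le_wd (x : Word) (hbal : phi x = 0) (hpre : ∀ i, 0 ≤ phi (x.take i)) :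
    2 * (x.count true : ℤ) ≤ wd x := by
  have hlen : x.length = 2 * x.count true := by have := phi_eq_count x; omega
  rw [wd, hlen]
  refine two_mul_le_sum_range_two_mul _ _ fun k hk => ?_
  have hodd : 2 ≤ phi (x.take (2 * k + 1)) := by
    have h := phi_eq_count (x.take (2 * k + 1))
    rw [List.length_take, min_eq_left (by omega)] at h
    have := hpre (2 * k + 1)
    omega
  linarith [hpre (2 * k + 1 + 1)]

theorem braid_pattern_width_general (x : Word) (m n : ℕ)
    (hbal : phi x = 0) (hpre : ∀ i, 0 ≤ phi (x.take i))
    (hm : x.count true = m) :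
    (∀ i, 0 ≤ phi ((x.flatMap (fun c => List.replicate n c)).take i)) ∧
    phi (x.flatMap (fun c => List.replicate n c)) = 0 ∧
    (x.flatMap (fun c => List.replicate n c)).count true = n * m ∧
    wd (x.flatMap (fun c => List.replicate n c)) = (n : ℤ) ^ 2 * wd x ∧
    2 * (n : ℤ) * (m : ℤ) ≤ (n : ℤ) ^ 2 * wd x := by
  subst hm
  have hwd : wd (stutter n x) = (n : ℤ) ^ 2 * wd x := by
    have := two_mul_wd_stutter n x
    rw [hbal, mul_zero, sub_zero] at this
    linarith
  refine ⟨phi_take_stutter_nonneg n x hpre, (phi_stutter n x).trans (by rw [hbal, mul_zero]),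
    count_stutter n true x, hwd, ?_⟩
  calc 2 * (n : ℤ) * x.count true = n * (2 * x.count true) := by ring
    _ ≤ n ^ 2 * (2 * x.count true) := by gcongr; exact_mod_cast Nat.le_self_pow two_ne_zero n
    _ ≤ n ^ 2 * wd x := by gcongr; exact two_mul_count_le_wd x hbal hpre

theorem braid_pattern_width (x : Word) (m n : ℕ) (hn : 1 ≤ n)
    (hbal : phi x = 0) (hpre : ∀ i, 0 ≤ phi (x.take i))
    (hm : x.count true = m) :
    (∀ i, 0 ≤ phi ((x.flatMap (fun c => List.replicate n c)).take i)) ∧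
    phi (x.flatMap (fun c => List.replicate n c)) = 0 ∧
    (x.flatMap (fun c => List.replicate n c)).count true = n * m ∧
    wd (x.flatMap (fun c => List.replicate n c)) = (n : ℤ) ^ 2 * wd x ∧
    2 * (n : ℤ) * (m : ℤ) ≤ (n : ℤ) ^ 2 * wd x :=
  braid_pattern_width_general x m n hbal hpre hm
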